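/- arXiv:0808.2688 — 4 statements merged into one kernel-verified Lean document; each statement's English description precedes it below -/
import Mathlib

section
/- Every real tensor of format 2×3×3 has tensor rank at most 4. -/
/-!
Write the tensor as the pair of slices `(A, B)`. If both slices are singular, each is a sum of two
rank-one matrices. Otherwise, say `B` is invertible, and it suffices to write `C = A B⁻¹` and `1`
as combinations of the same four rank-one matrices. Being of odd size, `C` has a real left
eigenvector `y`. Completing `y` by two rows orthogonal to `y`, one of them also orthogonal to
`C y`, gives a change of basis after which `C` has vanishing entries at `(0,1)`, `(0,2)` and
`(1,0)`, and for such a matrix four rank-one matrices can be written down explicitly.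
-/

/-- The rank of a real 2 x m x n tensor: the least natural number `r` such that
the tensor is a sum of `r` rank-one tensors. -/
noncomputable def tensorRank {m n : ℕ} (T : Fin 2 → Fin m → Fin n → ℝ) : ℕ :=
  sInf {r : ℕ | ∃ (a : Fin r → Fin 2 → ℝ) (u : Fin r → Fin m → ℝ) (v : Fin r → Fin n → ℝ),
    ∀ i j k, T i j k = ∑ t, a t i * u t j * v t k}

open Matrix Polynomial

theorem Polynomial.exists_isRoot_of_odd_natDegree {P : ℝ[X]} (hP : Odd P.natDegree) :
    ∃ x, P.IsRoot x := by
  wlog hlc : 0 ≤ P.leadingCoeff generalizing P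
  · obtain ⟨x, hx⟩ := this (P := -P) (by rwa [natDegree_neg]) (by rw [leadingCoeff_neg]; linarith)
    exact ⟨x, by simpa using hx⟩
  by_contra! hroot
  have hpos := zero_lt_eval_of_roots_lt_of_leadingCoeff_nonneg (x := 0)
    (fun y hy => absurd hy (hroot y)) hlc
  have hneg := zero_lt_negOnePow_mul_eval_of_lt_roots_of_leadingCoeff_nonneg (x := 0)
    (fun y hy => absurd hy (hroot y)) hlc
  rw [Int.negOnePow_odd _ (by exact_mod_cast hP)] at hneg
  push_cast at hneg
  linarith

theorem Matrix.exists_vecMul_eq_smul_of_odd_card {n : Type*} [Fintype n] [DecidableEq n]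
    (C : Matrix n n ℝ) (hn : Odd (Fintype.card n)) :
    ∃ (μ : ℝ) (y : n → ℝ), y ≠ 0 ∧ y ᵥ* C = μ • y := by
  obtain ⟨μ, hμ⟩ := exists_isRoot_of_odd_natDegree (P := C.charpoly)
    (by rwa [charpoly_natDegree_eq_dim])
  rw [IsRoot, eval_charpoly] at hμ
  obtain ⟨y, hy, hyC⟩ := exists_vecMul_eq_zero_iff.2 hμ
  refine ⟨μ, y, hy, ?_⟩
  rw [vecMul_sub, sub_eq_zero] at hyC
  ext i
  simp [← hyC, vecMul_diagonal, mul_comm]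

/-- The `2 × m × n` tensor with slices `A` and `B` has rank at most `r`. -/
def PencilRankLE {R m n : Type*} [CommSemiring R] (r : ℕ) (A B : Matrix m n R) : Prop :=
  ∃ (a b : Fin r → R) (u : Fin r → m → R) (w : Fin r → n → R),
    A = ∑ t, a t • vecMulVec (u t) (w t) ∧ B = ∑ t, b t • vecMulVec (u t) (w t)

namespace PencilRankLE

variable {R l m n k : Type*} [CommSemiring R] {r s : ℕ} {A B : Matrix m n R}

theorem swap (h : PencilRankLE r A B) : PencilRankLE r B A :=
  let ⟨a, b, u, w, hA, hB⟩ := h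
  ⟨b, a, u, w, hB, hA⟩

theorem mul_left [Fintype m] (S : Matrix l m R) (h : PencilRankLE r A B) :
    PencilRankLE r (S * A) (S * B) := by
  obtain ⟨a, b, u, w, rfl, rfl⟩ := h
  exact ⟨a, b, fun t => S *ᵥ u t, w, by simp [Matrix.mul_sum, mul_vecMulVec],
    by simp [Matrix.mul_sum, mul_vecMulVec]⟩

theorem mul_right [Fintype n] (P : Matrix n k R) (h : PencilRankLE r A B) :
    PencilRankLE r (A * P) (B * P) := by
  obtain ⟨a, b, u, w, rfl, rfl⟩ := h
  exact ⟨a, b, u, fun t => w t ᵥ* P, by simp [Matrix.sum_mul, vecMulVec_mul],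
    by simp [Matrix.sum_mul, vecMulVec_mul]⟩

theorem add {A' B' : Matrix m n R} (h : PencilRankLE r A B) (h' : PencilRankLE s A' B') :
    PencilRankLE (r + s) (A + A') (B + B') := by
  obtain ⟨a, b, u, w, rfl, rfl⟩ := h
  obtain ⟨a', b', u', w', rfl, rfl⟩ := h'
  exact ⟨Fin.append a a', Fin.append b b', Fin.append u u', Fin.append w w',
    by simp [Fin.sum_univ_add], by simp [Fin.sum_univ_add]⟩

end PencilRankLE

theorem PencilRankLE.of_conj {K n : Type*} [CommRing K] [Fintype n] [DecidableEq n] {r : ℕ}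
    {A B P : Matrix n n K} (hP : IsUnit P.det)
    (h : PencilRankLE r (P * A * P⁻¹) (P * B * P⁻¹)) : PencilRankLE r A B := by
  simpa [← Matrix.mul_assoc, nonsing_inv_mul _ hP, nonsing_inv_mul_cancel_right _ _ hP] using
    (h.mul_left P⁻¹).mul_right P

theorem pencilRankLE_of_row_eq_zero {R ι : Type*} [CommSemiring R] {n : ℕ}
    (M : Matrix (Fin (n + 1)) ι R) (h : M 0 = 0) : PencilRankLE n M 0 := by
  refine ⟨1, 0, fun t => Pi.single t.succ 1, fun t => M t.succ, ?_, by simp⟩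
  ext i j
  cases i using Fin.cases with
  | zero => simp [h, Matrix.sum_apply, vecMulVec_apply]
  | succ i => simp [Matrix.sum_apply, vecMulVec_apply, Pi.single_apply]

theorem tensorRank_le_of_pencilRankLE {m n r : ℕ} (T : Fin 2 → Fin m → Fin n → ℝ)
    (h : PencilRankLE r (of (T 0)) (of (T 1))) : tensorRank T ≤ r := by
  obtain ⟨a, b, u, w, hA, hB⟩ := h
  refine Nat.sInf_le ⟨fun t => ![a t, b t], u, w, fun i j k => ?_⟩
  fin_cases i
  · simpa [Matrix.sum_apply, vecMulVec_apply, mul_assoc] using congr_fun₂ hA j k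
  · simpa [Matrix.sum_apply, vecMulVec_apply, mul_assoc] using congr_fun₂ hB j k

theorem exists_ne_zero_dotProduct_eq_zero_and {K : Type*} [Field K] (a b : Fin 3 → K) :
    ∃ c ≠ 0, a ⬝ᵥ c = 0 ∧ b ⬝ᵥ c = 0 := by
  obtain ⟨c, hc, habc⟩ :=
    exists_mulVec_eq_zero_iff.2 (det_eq_zero_of_row_eq_zero (A := ![a, b, 0]) 2 fun _ => rfl)
  exact ⟨c, hc, congr_fun habc 0, congr_fun habc 1⟩

section OrderedField

variable {K : Type*} [Field K] [LinearOrder K] [IsStrictOrderedRing K]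

theorem isUnit_det_cross {y c : Fin 3 → K} (hy : y ≠ 0) (hc : c ≠ 0) (hyc : y ⬝ᵥ c = 0) :
    IsUnit (det ![y, c, y ⨯₃ c]) := by
  rw [← triple_product_eq_det, triple_product_permutation, triple_product_permutation,
    cross_dot_cross, hyc, zero_mul, sub_zero, isUnit_iff_ne_zero]
  exact mul_ne_zero (mt dotProduct_self_eq_zero.1 hy) (mt dotProduct_self_eq_zero.1 hc)

theorem exists_isUnit_det_row_zero_eq {y : Fin 3 → K} (hy : y ≠ 0) (a : Fin 3 → K) :
    ∃ P : Matrix (Fin 3) (Fin 3) K, IsUnit P.det ∧ P 0 = y ∧ P 1 ⬝ᵥ a = 0 ∧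
      P *ᵥ y = Pi.single 0 (y ⬝ᵥ y) := by
  obtain ⟨c, hc, hyc, hac⟩ := exists_ne_zero_dotProduct_eq_zero_and y a
  refine ⟨![y, c, y ⨯₃ c], isUnit_det_cross hy hc hyc, rfl, by rwa [dotProduct_comm], ?_⟩
  ext i
  fin_cases i <;> simp [mulVec, dotProduct_comm c, hyc, dotProduct_comm (y ⨯₃ c)]

end OrderedField

theorem pencilRankLE_four_of_apply_eq_zero {R : Type*} [CommRing R]
    (C : Matrix (Fin 3) (Fin 3) R) (h01 : C 0 1 = 0) (h02 : C 0 2 = 0) (h10 : C 1 0 = 0) :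
    PencilRankLE 4 C 1 := by
  -- the second and third rank-one matrices add up to the identity on the last two coordinates
  refine ⟨![C 0 0, C 1 1, C 1 1 + 1, 1], ![1, 1, 1, 0],
    ![Pi.single 0 1, Pi.single 1 1, ![0, C 1 2, 1], Pi.single 2 1],
    ![Pi.single 0 1, ![0, 1, -C 1 2], Pi.single 2 1, ![C 2 0, C 2 1, C 2 2 - C 1 1 - 1]], ?_, ?_⟩
  · ext i j
    fin_cases i <;> fin_cases j <;>
      simp [Matrix.sum_apply, Fin.sum_univ_four, vecMulVec_apply, h01, h02, h10]
    ring
  · ext i j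
    fin_cases i <;> fin_cases j <;> simp [Matrix.sum_apply, Fin.sum_univ_four, vecMulVec_apply]

theorem pencilRankLE_four_one (C : Matrix (Fin 3) (Fin 3) ℝ) : PencilRankLE 4 C 1 := by
  obtain ⟨μ, y, hy, hyC⟩ := C.exists_vecMul_eq_smul_of_odd_card (by decide)
  obtain ⟨P, hP, hP0, hP1, hPy⟩ := exists_isUnit_det_row_zero_eq hy (C *ᵥ y)
  set C' := P * C * P⁻¹ with hC'
  have hrow : Pi.single 0 1 ᵥ* C' = μ • Pi.single 0 1 := by
    calc Pi.single 0 1 ᵥ* C' = y ᵥ* C ᵥ* P⁻¹ := by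
          rw [hC', ← vecMul_vecMul, ← vecMul_vecMul, single_one_vecMul, ← hP0]; rfl
      _ = μ • (Pi.single 0 1 ᵥ* (P * P⁻¹)) := by
          rw [hyC, smul_vecMul, ← vecMul_vecMul, single_one_vecMul, ← hP0]; rfl
      _ = μ • Pi.single 0 1 := by rw [mul_nonsing_inv _ hP, vecMul_one]
  have hcol : C' *ᵥ Pi.single 0 (y ⬝ᵥ y) = P *ᵥ (C *ᵥ y) := by
    rw [← hPy, mulVec_mulVec, hC', nonsing_inv_mul_cancel_right P _ hP, ← mulVec_mulVec]
  have h10 : C' 1 0 = 0 := by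
    have := congr_fun hcol 1
    rw [mulVec_single, mulVec, hP1] at this
    simpa [dotProduct_self_eq_zero, hy] using this
  refine PencilRankLE.of_conj hP ?_
  rw [Matrix.mul_one, mul_nonsing_inv _ hP]
  exact pencilRankLE_four_of_apply_eq_zero C' (by simpa using congr_fun hrow 1)
    (by simpa using congr_fun hrow 2) h10

theorem pencilRankLE_two_zero_of_det_eq_zero {A : Matrix (Fin 3) (Fin 3) ℝ} (h : A.det = 0) :
    PencilRankLE 2 A 0 := by
  obtain ⟨y, hy, hyA⟩ := exists_vecMul_eq_zero_iff.2 h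
  obtain ⟨P, hP, hP0, -⟩ := exists_isUnit_det_row_zero_eq hy 0
  have hrow : (P * A) 0 = 0 := by
    rw [← hyA, ← hP0]; rfl
  simpa [← Matrix.mul_assoc, nonsing_inv_mul _ hP] using
    (pencilRankLE_of_row_eq_zero (P * A) hrow).mul_left P⁻¹

theorem pencilRankLE_four_of_isUnit_det (A : Matrix (Fin 3) (Fin 3) ℝ)
    {B : Matrix (Fin 3) (Fin 3) ℝ} (hB : IsUnit B.det) : PencilRankLE 4 A B := by
  simpa [nonsing_inv_mul_cancel_right _ _ hB] using (pencilRankLE_four_one (A * B⁻¹)).mul_right B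

theorem pencilRankLE_four (A B : Matrix (Fin 3) (Fin 3) ℝ) : PencilRankLE 4 A B := by
  by_cases hB : IsUnit B.det
  · exact pencilRankLE_four_of_isUnit_det A hB
  by_cases hA : IsUnit A.det
  · exact (pencilRankLE_four_of_isUnit_det B hA).swap
  rw [isUnit_iff_ne_zero, not_not] at hA hB
  simpa using (pencilRankLE_two_zero_of_det_eq_zero hA).add
    (pencilRankLE_two_zero_of_det_eq_zero hB).swap

theorem stmt_3 (T : Fin 2 → Fin 3 → Fin 3 → ℝ) :
    tensorRank T ≤ 4 :=
  tensorRank_le_of_pencilRankLE T (pencilRankLE_four _ _)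
end

section
/- Every real tensor of format 2×3×4 has tensor rank at most 5. -/
open Matrix Module Submodule

namespace Matrix

variable {K ι κ : Type*} [Field K] [Fintype ι] [Fintype κ] [DecidableEq ι] [DecidableEq κ]

theorem dual_apply_eq_sum (f : Dual K (Matrix ι κ K)) (M : Matrix ι κ K) :
    f M = ∑ i, ∑ j, M i j * f (single i j 1) := by
  conv_lhs => rw [matrix_eq_sum_single M]
  simp only [map_sum]
  congr! 2 with i _ j
  rw [← smul_eq_mul, ← map_smul, smul_single, smul_eq_mul, mul_one]

theorem sum_smul_single_sub_eq_of_apply_eq_zero {f : Dual K (Matrix ι κ K)} (p : ι) (q : κ)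
    {M : Matrix ι κ K} (hM : f M = 0) :
    ∑ i, ∑ j, M i j • (single i j 1 - (f (single i j 1) / f (single p q 1)) • single p q 1) =
      M := by
  have hc_sum : ∑ i, ∑ j, M i j * (f (single i j 1) / f (single p q 1)) = 0 := by
    simp only [mul_div_assoc', ← Finset.sum_div, ← dual_apply_eq_sum, hM, zero_div]
  simp only [smul_sub, Finset.sum_sub_distrib, smul_smul, ← Finset.sum_smul, hc_sum, zero_smul,
    sub_zero]
  simp only [smul_single, smul_eq_mul, mul_one]
  exact (matrix_eq_sum_single M).symm

theorem ker_le_span_vecMulVec_mem_ker {f : Dual K (Matrix ι κ K)} (hf : f ≠ 0) :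
    LinearMap.ker f ≤
      span K ((LinearMap.ker f : Set (Matrix ι κ K)) ∩ {M | ∃ a b, vecMulVec a b = M}) := by
  set S := span K ((LinearMap.ker f : Set (Matrix ι κ K)) ∩ {M | ∃ a b, vecMulVec a b = M})
  have vecMulVec_mem {a : ι → K} {b : κ → K} (h : f (vecMulVec a b) = 0) :
      vecMulVec a b ∈ S := subset_span ⟨h, a, b, rfl⟩
  obtain ⟨p, q, hd⟩ : ∃ p q, f (single p q 1) ≠ 0 := by
    by_contra! h
    exact hf (LinearMap.ext fun M => by simp [dual_apply_eq_sum f M, h])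
  let c (i : ι) (j : κ) : K := f (single i j 1) / f (single p q 1)
  let N (i : ι) (j : κ) : Matrix ι κ K := single i j 1 - c i j • single p q 1
  have hN_ker (i j) : f (N i j) = 0 := by
    rw [map_sub, map_smul, smul_eq_mul, div_mul_cancel₀ _ hd, sub_self]
  have hN_row (j : κ) : N p j ∈ S := by
    have h : N p j = vecMulVec (Pi.single p 1) (Pi.single j 1 - c p j • Pi.single q 1) := by
      simp only [N, vecMulVec_sub, vecMulVec_smul, single_eq_single_vecMulVec_single]
    exact h ▸ vecMulVec_mem (h ▸ hN_ker p j)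
  have hN_col (i : ι) : N i q ∈ S := by
    have h : N i q = vecMulVec (Pi.single i 1 - c i q • Pi.single p 1) (Pi.single q 1) := by
      simp only [N, sub_vecMulVec, smul_vecMulVec, single_eq_single_vecMulVec_single]
    exact h ▸ vecMulVec_mem (h ▸ hN_ker i q)
  have hN (i j) : N i j ∈ S := by
    set s := 1 - c i q
    set t := -(c i j + s * c p j)
    -- `s`, `t` are chosen so that the coefficients of `single p q 1` on both sides agree.
    have h : vecMulVec (Pi.single i 1 + s • Pi.single p 1) (Pi.single j 1 + t • Pi.single q 1) =
        N i j + t • N i q + s • N p j := by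
      simp only [N, add_vecMulVec, vecMulVec_add, smul_vecMulVec, vecMulVec_smul,
        ← single_eq_single_vecMulVec_single]
      module
    have hX : N i j + t • N i q + s • N p j ∈ S := by
      rw [← h]
      exact vecMulVec_mem (by simp only [h, map_add, map_smul, hN_ker, smul_zero, add_zero])
    exact (S.add_mem_iff_left (S.smul_mem t (hN_col i))).1
      ((S.add_mem_iff_left (S.smul_mem s (hN_row j))).1 hX)
  intro M hM
  rw [← sum_smul_single_sub_eq_of_apply_eq_zero p q hM]
  exact S.sum_mem fun i _ => S.sum_mem fun j _ => S.smul_mem _ (hN i j)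

theorem exists_vecMulVec_span_of_lt_top {W : Submodule K (Matrix ι κ K)} (hW : W < ⊤) :
    ∃ r < Fintype.card ι * Fintype.card κ, ∃ (a : Fin r → ι → K) (b : Fin r → κ → K),
      W ≤ span K (Set.range fun t => vecMulVec (a t) (b t)) := by
  obtain ⟨f, hf, hWf⟩ := W.exists_le_ker_of_lt_top hW
  set R := (LinearMap.ker f : Set (Matrix ι κ K)) ∩ {M | ∃ a b, vecMulVec a b = M}
  have hR : span K R = LinearMap.ker f :=
    le_antisymm (span_le.2 Set.inter_subset_left) (ker_le_span_vecMulVec_mem_ker hf)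
  obtain ⟨g, hgR, hg_span, -⟩ := exists_fun_fin_finrank_span_eq K R
  choose a b hab using fun t => (hgR t).2
  refine ⟨_, ?_, a, b, ?_⟩
  · have := Dual.finrank_ker_add_one_of_ne_zero hf
    rw [finrank_matrix, finrank_self, mul_one] at this
    rw [hR]
    omega
  · simp only [hab, hg_span, hR, hWf]

end Matrix

theorem tensorRank_le_of_slices_mem_span {m n r : ℕ} (T : Fin 2 → Fin m → Fin n → ℝ)
    (a : Fin r → Fin 2 → ℝ) (u : Fin r → Fin m → ℝ)
    (h : ∀ k, of (fun i j => T i j k) ∈ span ℝ (Set.range fun t => vecMulVec (a t) (u t))) :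
    tensorRank T ≤ r := by
  choose v hv using fun k => (mem_span_range_iff_exists_fun ℝ).1 (h k)
  refine Nat.sInf_le ⟨a, u, fun t k => v k t, fun i j k => ?_⟩
  simpa [Matrix.sum_apply, vecMulVec_apply, mul_comm, mul_left_comm] using
    (congr_fun₂ (hv k) i j).symm

theorem tensorRank_lt_of_lt {m n : ℕ} (T : Fin 2 → Fin m → Fin n → ℝ) (hn : n < 2 * m) :
    tensorRank T < 2 * m := by
  let slice (k : Fin n) : Matrix (Fin 2) (Fin m) ℝ := of fun i j => T i j k
  have hW : span ℝ (Set.range slice) < ⊤ := by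
    apply lt_top_of_finrank_lt_finrank
    calc finrank ℝ (span ℝ (Set.range slice)) ≤ n :=
          (finrank_range_le_card slice).trans_eq (Fintype.card_fin n)
      _ < finrank ℝ (Matrix (Fin 2) (Fin m) ℝ) := by simpa [finrank_matrix] using hn
  obtain ⟨r, hr, a, u, hspan⟩ := exists_vecMulVec_span_of_lt_top hW
  calc tensorRank T ≤ r :=
        tensorRank_le_of_slices_mem_span T a u fun k => hspan (subset_span ⟨k, rfl⟩)
    _ < 2 * m := by simpa using hr

theorem stmt_4 (T : Fin 2 → Fin 3 → Fin 4 → ℝ) :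
    tensorRank T ≤ 5 :=
  Nat.le_of_lt_succ (tensorRank_lt_of_lt T (by norm_num))
end

section
/- Let A and B be real n×n matrices and let T be the 2×n×n tensor whose two frontal slices are A and B (i.e., T(0,j,k) = A(j,k) and T(1,j,k) = B(j,k)). If the linear span of A and B contains at least one invertible matrix, then the tensor rank of T is at most ⌊3n/2⌋. -/
open Polynomial Module Matrix

universe u

variable {K : Type u} {V W : Type*} [Field K] [AddCommGroup V] [Module K V] [AddCommGroup W]
  [Module K W]

/-- Viewed as a `2 × dim W × dim V` tensor, such a pair `(f, g)` has rank at most `card ι`. -/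
def HasRankOneDecomp (f g : V →ₗ[K] W) (ι : Type*) [Fintype ι] : Prop :=
  ∃ (φ : ι → Dual K V) (x : ι → W) (a b : ι → K),
    f = ∑ t, a t • (φ t).smulRight (x t) ∧ g = ∑ t, b t • (φ t).smulRight (x t)

namespace HasRankOneDecomp

variable {f g : V →ₗ[K] W} {ι κ : Type*} [Fintype ι] [Fintype κ]

theorem reindex (e : ι ≃ κ) (h : HasRankOneDecomp f g ι) : HasRankOneDecomp f g κ := by
  obtain ⟨φ, x, a, b, rfl, rfl⟩ := h
  exact ⟨φ ∘ e.symm, x ∘ e.symm, a ∘ e.symm, b ∘ e.symm,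
    (e.symm.sum_comp _).symm, (e.symm.sum_comp _).symm⟩

theorem add {f' g' : V →ₗ[K] W} (h : HasRankOneDecomp f g ι) (h' : HasRankOneDecomp f' g' κ) :
    HasRankOneDecomp (f + f') (g + g') (ι ⊕ κ) := by
  obtain ⟨φ, x, a, b, rfl, rfl⟩ := h
  obtain ⟨φ', x', a', b', rfl, rfl⟩ := h'
  exact ⟨Sum.elim φ φ', Sum.elim x x', Sum.elim a a', Sum.elim b b',
    by simp [Fintype.sum_sum_type], by simp [Fintype.sum_sum_type]⟩

theorem sum {I : Type*} [Fintype I] {κ : I → Type*} [∀ i, Fintype (κ i)]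
    {f g : I → V →ₗ[K] W} (h : ∀ i, HasRankOneDecomp (f i) (g i) (κ i)) :
    HasRankOneDecomp (∑ i, f i) (∑ i, g i) (Σ i, κ i) := by
  choose φ x a b hf hg using h
  exact ⟨fun t => φ t.1 t.2, fun t => x t.1 t.2, fun t => a t.1 t.2, fun t => b t.1 t.2,
    by simp only [hf, Fintype.sum_sigma], by simp only [hg, Fintype.sum_sigma]⟩

theorem comp {V' W' : Type*} [AddCommGroup V'] [Module K V'] [AddCommGroup W'] [Module K W']
    (h : HasRankOneDecomp f g ι) (P : W →ₗ[K] W') (Q : V' →ₗ[K] V) :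
    HasRankOneDecomp (P ∘ₗ f ∘ₗ Q) (P ∘ₗ g ∘ₗ Q) ι := by
  obtain ⟨φ, x, a, b, rfl, rfl⟩ := h
  refine ⟨fun t => φ t ∘ₗ Q, fun t => P (x t), a, b, ?_, ?_⟩ <;> ext <;> simp

theorem linearCombination (h : HasRankOneDecomp f g ι) (α β γ δ : K) :
    HasRankOneDecomp (α • f + β • g) (γ • f + δ • g) ι := by
  obtain ⟨φ, x, a, b, rfl, rfl⟩ := h
  refine ⟨φ, x, fun t => α * a t + β * b t, fun t => γ * a t + δ * b t, ?_, ?_⟩ <;>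
    simp only [Finset.smul_sum, smul_smul, add_smul, Finset.sum_add_distrib]

theorem lmap {I : Type*} [Fintype I] [DecidableEq I] {M N : I → Type*}
    [∀ i, AddCommGroup (M i)] [∀ i, Module K (M i)] [∀ i, AddCommGroup (N i)]
    [∀ i, Module K (N i)] {κ : I → Type*} [∀ i, Fintype (κ i)]
    {f g : ∀ i, M i →ₗ[K] N i}
    (h : ∀ i, HasRankOneDecomp (f i) (g i) (κ i)) :
    HasRankOneDecomp (DirectSum.lmap f) (DirectSum.lmap g) (Σ i, κ i) := by
  have hsum (F : ∀ i, M i →ₗ[K] N i) : DirectSum.lmap F =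
      ∑ i, DirectSum.lof K I N i ∘ₗ F i ∘ₗ DirectSum.component K I M i := by
    refine DirectSum.linearMap_ext K fun i => LinearMap.ext fun x => ?_
    simp only [LinearMap.comp_apply, LinearMap.sum_apply]
    rw [Finset.sum_eq_single i]
    · simp
    · intro j _ hj
      simp [DirectSum.component.of, hj.symm]
    · simp
  rw [hsum f, hsum g]
  exact sum fun i => (h i).comp _ _

theorem of_conj {V' : Type*} [AddCommGroup V'] [Module K V'] {g : V →ₗ[K] V}
    (e : V ≃ₗ[K] V') (h : HasRankOneDecomp LinearMap.id (e.conj g) ι) :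
    HasRankOneDecomp LinearMap.id g ι := by
  convert h.comp e.symm.toLinearMap e.toLinearMap using 1 <;> ext <;> simp [LinearEquiv.conj_apply]

end HasRankOneDecomp

theorem hasRankOneDecomp_zero_smulRight (φ : Dual K V) (z : W) :
    HasRankOneDecomp 0 (φ.smulRight z) (Fin 1) :=
  ⟨fun _ => φ, fun _ => z, fun _ => 0, fun _ => 1, by simp, by simp⟩

theorem hasRankOneDecomp_id_of_subsingleton {ι : Type*} [Fintype ι] [Subsingleton ι]
    (b : Basis ι K V) (g : V →ₗ[K] V) : HasRankOneDecomp LinearMap.id g ι := by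
  refine ⟨b.coord, b, fun _ => 1, fun i => b.coord i (g (b i)), ?_, ?_⟩ <;>
    refine b.ext fun j => ?_
  · simp [b.repr_self, Finsupp.single_apply]
  · conv_lhs => rw [← b.sum_repr (g (b j))]
    simp [Subsingleton.elim _ j, smul_comm (Fintype.card ι)]

theorem Module.Basis.eq_smulRight_of_apply_eq_zero {ι : Type*} (b : Basis ι K V)
    (h : V →ₗ[K] W) (i : ι) (hh : ∀ j, j ≠ i → h (b j) = 0) :
    h = (b.coord i).smulRight (h (b i)) := by
  refine b.ext fun j => ?_
  obtain rfl | hj := eq_or_ne j i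
  · simp
  · simp [hh j hj, hj.symm]

/-- In power bases both multiplications send `gen ^ j` to `gen ^ (j + 1)` for `j + 1 < dim`, so
they differ only on the last basis vector. -/
theorem PowerBasis.exists_conj_mulLeft_eq_add_smulRight {S S' : Type*} [Ring S] [Algebra K S]
    [Ring S'] [Algebra K S'] (pb : PowerBasis K S) (pb' : PowerBasis K S') (h : pb.dim = pb'.dim)
    (hd : 0 < pb'.dim) : ∃ (e : S ≃ₗ[K] S') (φ : Dual K S') (z : S'),
      e.conj (LinearMap.mulLeft K pb.gen) = LinearMap.mulLeft K pb'.gen + φ.smulRight z := by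
  let e := pb.basis.equiv pb'.basis (finCongr h)
  refine ⟨e, _, _, sub_eq_iff_eq_add'.1 <|
    pb'.basis.eq_smulRight_of_apply_eq_zero _ ⟨pb'.dim - 1, by omega⟩ fun j hj => ?_⟩
  have hj' : (j : ℕ) + 1 < pb'.dim := by
    have : (j : ℕ) ≠ pb'.dim - 1 := fun h' => hj (Fin.ext h')
    omega
  have he : ∀ k : Fin pb.dim, e (pb.gen ^ (k : ℕ)) = pb'.gen ^ (k : ℕ) := fun k => by
    simpa [e, pb.basis_eq_pow, pb'.basis_eq_pow] using pb.basis.equiv_apply k pb'.basis (finCongr h)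
  have hsymm : e.symm (pb'.gen ^ (j : ℕ)) = pb.gen ^ (j : ℕ) :=
    e.symm_apply_eq.2 (he ⟨j, by omega⟩).symm
  simp only [LinearMap.sub_apply, LinearEquiv.conj_apply, LinearMap.comp_apply,
    LinearEquiv.coe_coe, LinearMap.mulLeft_apply, pb'.basis_eq_pow, hsymm, ← pow_succ',
    he ⟨j + 1, by omega⟩, sub_self]

theorem hasRankOneDecomp_adjoinRoot_nodal {ι : Type*} [Fintype ι] [DecidableEq ι] {v : ι → K}
    (hv : Function.Injective v) :
    HasRankOneDecomp LinearMap.id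
      (LinearMap.mulLeft K (AdjoinRoot.root (Lagrange.nodal Finset.univ v))) ι := by
  set p := Lagrange.nodal Finset.univ v
  let ev (i : ι) : AdjoinRoot p →ₐ[K] K := AdjoinRoot.liftAlgHom p (Algebra.ofId K K) (v i)
    (by simpa using Lagrange.eval_nodal_at_node (Finset.mem_univ i))
  have interp : ∀ w, w = ∑ i, ev i w • AdjoinRoot.mk p (Lagrange.basis Finset.univ v i) := by
    intro w
    obtain ⟨P, hdeg, rfl⟩ : ∃ P : K[X], P.degree < (Finset.univ : Finset ι).card ∧
        AdjoinRoot.mk p P = w := by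
      obtain ⟨P, rfl⟩ := AdjoinRoot.mk_surjective w
      refine ⟨P %ₘ p, ?_, ?_⟩
      · have := degree_modByMonic_lt P (Lagrange.nodal_monic (s := Finset.univ) (v := v))
        rwa [Lagrange.degree_nodal] at this
      · rw [← AdjoinRoot.modByMonicHom_mk Lagrange.nodal_monic]
        exact AdjoinRoot.mk_leftInverse Lagrange.nodal_monic _
    conv_lhs => rw [Lagrange.eq_interpolate hv.injOn hdeg]
    simp [Lagrange.interpolate_apply, ev, map_sum, Algebra.smul_def]
  refine ⟨fun i => (ev i).toLinearMap, fun i => AdjoinRoot.mk p (Lagrange.basis Finset.univ v i),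
    fun _ => 1, v, ?_, ?_⟩ <;> ext w
  · simpa using interp w
  · simpa [ev, smul_smul] using interp (AdjoinRoot.root p * w)

theorem exists_hasRankOneDecomp_adjoinRoot [Infinite K] {q : K[X]} (hq : q ≠ 0) :
    ∃ r, 2 * r ≤ 3 * q.natDegree ∧
      HasRankOneDecomp LinearMap.id (LinearMap.mulLeft K (AdjoinRoot.root q)) (Fin r) := by
  set pb := AdjoinRoot.powerBasis hq
  have hdim : pb.dim = q.natDegree := AdjoinRoot.powerBasis_dim hq
  rcases le_or_gt q.natDegree 1 with hd | hd
  · have : Subsingleton (Fin q.natDegree) := Fin.subsingleton_iff_le_one.2 hd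
    exact ⟨q.natDegree, by omega,
      hasRankOneDecomp_id_of_subsingleton (pb.basis.reindex (finCongr hdim)) _⟩
  · let v : Fin q.natDegree ↪ K := Fin.valEmbedding.trans (Infinite.natEmbedding K)
    have hp := Lagrange.nodal_ne_zero (s := Finset.univ) (v := v)
    set pb' := AdjoinRoot.powerBasis hp
    have hdim' : pb'.dim = q.natDegree := by
      simp [pb', AdjoinRoot.powerBasis_dim, Lagrange.natDegree_nodal]
    obtain ⟨e, φ, z, he⟩ :=
      pb.exists_conj_mulLeft_eq_add_smulRight pb' (hdim.trans hdim'.symm) (by omega)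
    simp only [pb, pb', AdjoinRoot.powerBasis_gen] at he
    have h := (hasRankOneDecomp_adjoinRoot_nodal v.injective).add
      (hasRankOneDecomp_zero_smulRight φ z)
    rw [add_zero, ← he] at h
    exact ⟨q.natDegree + 1, by omega, (h.of_conj e).reindex finSumFinEquiv⟩

theorem exists_linearEquiv_directSum_adjoinRoot [FiniteDimensional K V] (g : V →ₗ[K] V) :
    ∃ (I : Type u) (_ : Fintype I) (Q : I → K[X]) (_ : ∀ i, Q i ≠ 0)
      (E : V ≃ₗ[K] DirectSum I fun i => AdjoinRoot (Q i)),
      ∀ w, E (g w) =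
        DirectSum.lmap (fun i => LinearMap.mulLeft K (AdjoinRoot.root (Q i))) (E w) := by
  have htors : IsTorsion K[X] (AEval' g) := fun x =>
    ⟨⟨g.charpoly, mem_nonZeroDivisors_of_ne_zero g.charpoly_monic.ne_zero⟩,
      (AEval'.of g).symm.injective <| by
        rw [Submonoid.smul_def, AEval.of_symm_smul, LinearMap.aeval_self_charpoly]; simp⟩
  obtain ⟨I, _, p, hp, e, ⟨L⟩⟩ := equiv_directSum_of_isTorsion htors
  refine ⟨I, inferInstance, fun i => p i ^ e i, fun i => pow_ne_zero _ (hp i).ne_zero,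
    (AEval'.of g).trans (L.restrictScalars K), fun w => DFinsupp.ext fun i => ?_⟩
  change L (AEval'.of g (g w)) i =
    AdjoinRoot.root (p i ^ e i) * (show AdjoinRoot (p i ^ e i) from L (AEval'.of g w) i)
  rw [← AEval'.X_smul_of, map_smul, DirectSum.smul_apply]
  obtain ⟨P, hP⟩ := Submodule.Quotient.mk_surjective _ (L (AEval'.of g w) i)
  rw [← hP, ← Submodule.Quotient.mk_smul]
  rfl

theorem exists_hasRankOneDecomp_id [Infinite K] [FiniteDimensional K V] (g : V →ₗ[K] V) :
    ∃ r, 2 * r ≤ 3 * finrank K V ∧ HasRankOneDecomp LinearMap.id g (Fin r) := by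
  classical
  obtain ⟨I, _, Q, hQ, E, hE⟩ := exists_linearEquiv_directSum_adjoinRoot g
  choose r hr hdec using fun i => exists_hasRankOneDecomp_adjoinRoot (hQ i)
  have hconj : E.conj g =
      DirectSum.lmap (fun i => LinearMap.mulLeft K (AdjoinRoot.root (Q i))) := by
    ext y; simp [LinearEquiv.conj_apply, hE]
  have h := HasRankOneDecomp.lmap hdec
  rw [DirectSum.lmap_id, ← hconj] at h
  have hrank : finrank K V = ∑ i, (Q i).natDegree := by
    have := fun i => (AdjoinRoot.powerBasis (hQ i)).finite
    rw [E.finrank_eq, finrank_directSum]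
    exact Finset.sum_congr rfl fun i _ => by
      rw [(AdjoinRoot.powerBasis (hQ i)).finrank, AdjoinRoot.powerBasis_dim]
  refine ⟨Fintype.card (Σ i, Fin (r i)), ?_, (h.of_conj E).reindex (Fintype.equivFin _)⟩
  simp only [Fintype.card_sigma, Fintype.card_fin, hrank, Finset.mul_sum]
  exact Finset.sum_le_sum fun i _ => hr i

theorem Matrix.exists_hasRankOneDecomp_toLin' [Infinite K] {n : ℕ} {M : Matrix (Fin n) (Fin n) K}
    (hM : IsUnit M) (N : Matrix (Fin n) (Fin n) K) :
    ∃ r, 2 * r ≤ 3 * n ∧ HasRankOneDecomp (toLin' M) (toLin' N) (Fin r) := by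
  obtain ⟨r, hr, h⟩ := exists_hasRankOneDecomp_id (toLin' (M⁻¹ * N))
  refine ⟨r, by simpa using hr, ?_⟩
  have h' := h.comp (toLin' M) LinearMap.id
  simp only [LinearMap.comp_id] at h'
  rwa [← toLin'_mul, ← Matrix.mul_assoc, mul_nonsing_inv _ ((isUnit_iff_isUnit_det M).1 hM),
    Matrix.one_mul] at h'

theorem exists_eq_smul_add_smul_of_isUnit [LinearOrder K] [IsStrictOrderedRing K] {R : Type*}
    [Ring R] [Module K R] {A B : R} {α β : K} (h : IsUnit (α • A + β • B)) :
    ∃ a b c d : K,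
      A = a • (α • A + β • B) + b • ((-β) • A + α • B) ∧
      B = c • (α • A + β • B) + d • ((-β) • A + α • B) := by
  by_cases hαβ : α ^ 2 + β ^ 2 = 0
  · obtain ⟨rfl, rfl⟩ : α = 0 ∧ β = 0 := ⟨by nlinarith, by nlinarith⟩
    have : Subsingleton R := subsingleton_of_zero_eq_one (isUnit_zero_iff.1 (by simpa using h))
    exact ⟨0, 0, 0, 0, Subsingleton.elim _ _, Subsingleton.elim _ _⟩
  · set ρ := α ^ 2 + β ^ 2
    refine ⟨α / ρ, -β / ρ, β / ρ, α / ρ, ?_, ?_⟩ <;>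
      match_scalars <;> field_simp <;> ring

theorem tensorRank_le_of_hasRankOneDecomp {m n r : ℕ} {A B : Matrix (Fin m) (Fin n) ℝ}
    (h : HasRankOneDecomp (toLin' A) (toLin' B) (Fin r)) {T : Fin 2 → Fin m → Fin n → ℝ}
    (hT0 : ∀ j k, T 0 j k = A j k) (hT1 : ∀ j k, T 1 j k = B j k) : tensorRank T ≤ r := by
  obtain ⟨φ, x, a, b, hA, hB⟩ := h
  have entry {C : Matrix (Fin m) (Fin n) ℝ} {c : Fin r → ℝ}
      (hC : toLin' C = ∑ t, c t • (φ t).smulRight (x t)) (j k) :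
      C j k = ∑ t, c t * x t j * φ t (Pi.single k 1) := by
    have := congrFun (LinearMap.congr_fun hC (Pi.single k 1)) j
    rw [toLin'_apply, mulVec_single_one, col_apply] at this
    rw [this, LinearMap.sum_apply, Finset.sum_apply]
    exact Finset.sum_congr rfl fun t _ => by simp; ring
  refine Nat.sInf_le ⟨fun t => ![a t, b t], x, fun t k => φ t (Pi.single k 1), fun i j k => ?_⟩
  fin_cases i
  · simp [hT0, entry hA]
  · simp [hT1, entry hB]

theorem stmt_8 (n : ℕ) (A B : Matrix (Fin n) (Fin n) ℝ)
    (hspan : ∃ α β : ℝ, IsUnit (α • A + β • B))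
    (T : Fin 2 → Fin n → Fin n → ℝ)
    (hT0 : ∀ j k, T 0 j k = A j k) (hT1 : ∀ j k, T 1 j k = B j k) :
    tensorRank T ≤ 3 * n / 2 := by
  obtain ⟨α, β, hM⟩ := hspan
  obtain ⟨r, hr, h⟩ := exists_hasRankOneDecomp_toLin' hM ((-β) • A + α • B)
  obtain ⟨a, b, c, d, hA, hB⟩ := exists_eq_smul_add_smul_of_isUnit hM
  have hAB := h.linearCombination a b c d
  simp only [← map_smul, ← map_add, ← hA, ← hB] at hAB
  exact (tensorRank_le_of_hasRankOneDecomp hAB hT0 hT1).trans (by omega)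
end

section
/- For every real n×n matrix F there exist real symmetric n×n matrices A and B with B invertible such that F = A · B⁻¹. -/
/-!
It suffices to find an invertible symmetric `S` with `S F = Fᵀ S`, i.e. a nondegenerate symmetric
bilinear form for which `F` is self-adjoint: then `F = (F S⁻¹) (S⁻¹)⁻¹` with `F S⁻¹` symmetric.
On a cyclic module `K[X] ⧸ (q)`, `q` monic, multiplication by `X` is self-adjoint for
`(a, b) ↦ coeff of X ^ (deg q - 1) in a b mod q`, which is nondegenerate because every nonzero
residue can be shifted by a power of `X` so that its leading coefficient sits in degree
`deg q - 1`. By the structure theorem for finitely generated torsion `K[X]`-modules, `Kⁿ` with `X`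
acting as `F` is a direct sum of cyclic modules, and the orthogonal sum of these forms does it.
-/

open Matrix Polynomial

def IsSymmetrizable (R : Type*) [CommRing R] {M : Type*} [AddCommGroup M] [Module R M]
    (f : M → M) : Prop :=
  ∃ B : LinearMap.BilinForm R M, B.IsSymm ∧ B.SeparatingLeft ∧ B.IsSelfAdjoint f

section CommRing

variable {R : Type*} [CommRing R]

theorem IsSymmetrizable.of_linearEquiv {M N : Type*} [AddCommGroup M] [Module R M]
    [AddCommGroup N] [Module R N] (e : M ≃ₗ[R] N) {f : M → M} {g : N → N}
    (hfg : ∀ m, e (f m) = g (e m)) (hg : IsSymmetrizable R g) : IsSymmetrizable R f := by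
  obtain ⟨B, hsymm, hsep, hadj⟩ := hg
  refine ⟨B.compl₁₂ e e, ⟨fun x y => hsymm.eq (e x) (e y)⟩, fun x hx => ?_, fun x y => ?_⟩
  · exact e.map_eq_zero_iff.mp (hsep (e x) fun y => by simpa using hx (e.symm y))
  · simpa [hfg] using hadj (e x) (e y)

theorem isSymmetrizable_pi {ι : Type*} [Fintype ι] {W : ι → Type*} [∀ i, AddCommGroup (W i)]
    [∀ i, Module R (W i)] {g : ∀ i, W i → W i} (hg : ∀ i, IsSymmetrizable R (g i)) :
    IsSymmetrizable R (fun v i => g i (v i)) := by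
  classical
  choose B hsymm hsep hadj using hg
  refine ⟨∑ i, (B i).compl₁₂ (LinearMap.proj i) (LinearMap.proj i),
    ⟨fun v w => ?_⟩, fun v hv => ?_, fun v w => ?_⟩
  · simp [(hsymm _).eq]
  · ext i
    refine hsep i (v i) fun u => ?_
    have hvi := hv (Pi.single i u)
    simp only [LinearMap.sum_apply, LinearMap.compl₁₂_apply, LinearMap.proj_apply] at hvi
    rwa [Finset.sum_eq_single i (fun j _ hji => by rw [Pi.single_eq_of_ne hji, map_zero])
      (by simp), Pi.single_eq_same] at hvi
  · simp only [LinearMap.sum_apply, LinearMap.compl₁₂_apply, LinearMap.proj_apply]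
    exact Finset.sum_congr rfl fun i _ => hadj i (v i) (w i)

theorem isSymmetrizable_mul_left {A : Type*} [CommRing A] [Algebra R A] (φ : A →ₗ[R] R)
    (hφ : ∀ a ≠ 0, ∃ b, φ (a * b) ≠ 0) (c : A) : IsSymmetrizable R (c * ·) := by
  refine ⟨(LinearMap.mul R A).compr₂ φ, ⟨fun a b => by simp [mul_comm]⟩, fun a ha => ?_,
    fun a b => by simp [mul_assoc, mul_left_comm]⟩
  by_contra h
  obtain ⟨b, hb⟩ := hφ a h
  exact hb (ha b)

theorem AdjoinRoot.exists_coeff_modByMonicHom_mul_ne_zero [Nontrivial R] {q : R[X]}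
    (hq : q.Monic) {a : AdjoinRoot q} (ha : a ≠ 0) :
    ∃ b, (AdjoinRoot.modByMonicHom hq (a * b)).coeff (q.natDegree - 1) ≠ 0 := by
  obtain ⟨p, rfl⟩ := AdjoinRoot.mk_surjective a
  set r := p %ₘ q
  have hpr : AdjoinRoot.mk q p = AdjoinRoot.mk q r :=
    (AdjoinRoot.mk_leftInverse hq (AdjoinRoot.mk q p)).symm
  have hr : r ≠ 0 := by rintro h; rw [hpr, h, map_zero] at ha; exact ha rfl
  have hrq : r.natDegree < q.natDegree := natDegree_lt_natDegree hr (degree_modByMonic_lt p hq)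
  set m := q.natDegree - 1 - r.natDegree
  have hlt : (r * X ^ m).degree < q.degree := by
    apply degree_lt_degree
    rw [natDegree_mul_X_pow _ hr]
    omega
  refine ⟨AdjoinRoot.mk q (X ^ m), ?_⟩
  rw [hpr, ← map_mul, AdjoinRoot.modByMonicHom_mk, (modByMonic_eq_self_iff hq).mpr hlt,
    show q.natDegree - 1 = r.natDegree + m by omega, coeff_mul_X_pow]
  exact mt leadingCoeff_eq_zero.mp hr

end CommRing

theorem isSymmetrizable_X_smul_quotient {K : Type*} [Field K] {q : K[X]} (hq : q ≠ 0) :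
    IsSymmetrizable K (fun v : K[X] ⧸ K[X] ∙ q => (X : K[X]) • v) := by
  set q' := q * C q.leadingCoeff⁻¹
  have hmonic : q'.Monic := monic_mul_leadingCoeff_inv hq
  have hspan : K[X] ∙ q = K[X] ∙ q' := (Ideal.span_singleton_mul_right_unit
    (isUnit_C.mpr (inv_ne_zero (leadingCoeff_ne_zero.mpr hq)).isUnit) q).symm
  let e : (K[X] ⧸ K[X] ∙ q) ≃ₗ[K] AdjoinRoot q' :=
    (Submodule.quotEquivOfEq _ _ hspan).restrictScalars K
  refine IsSymmetrizable.of_linearEquiv e (g := (AdjoinRoot.root q' * ·)) (fun v => ?_)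
    (isSymmetrizable_mul_left ((lcoeff K _).comp (AdjoinRoot.modByMonicHom hmonic))
      (fun a ha => AdjoinRoot.exists_coeff_modByMonicHom_mul_ne_zero hmonic ha) _)
  induction v using Submodule.Quotient.induction_on with
  | H p => rfl

theorem Module.End.isSymmetrizable {K V : Type*} [Field K] [AddCommGroup V] [Module K V]
    [FiniteDimensional K V] (f : Module.End K V) : IsSymmetrizable K f := by
  obtain ⟨ι, _, p, hp, e, ⟨g⟩⟩ :=
    Module.equiv_directSum_of_isTorsion (Module.AEval.isTorsion_of_finiteDimensional K V f)
  classical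
  let E : V ≃ₗ[K] ∀ i, K[X] ⧸ K[X] ∙ p i ^ e i := (Module.AEval'.of f).trans
    ((g.trans (DirectSum.linearEquivFunOnFintype K[X] ι _)).restrictScalars K)
  refine IsSymmetrizable.of_linearEquiv E (g := fun v i => (X : K[X]) • v i) (fun v => ?_)
    (isSymmetrizable_pi fun i => isSymmetrizable_X_smul_quotient (pow_ne_zero _ (hp i).ne_zero))
  change _ = (X : K[X]) • E v
  simp only [E, LinearEquiv.trans_apply, LinearEquiv.restrictScalars_apply,
    ← Module.AEval'.X_smul_of, map_smul]

theorem Matrix.exists_symm_isUnit_mul_eq_transpose_mul {K n : Type*} [Field K] [Fintype n]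
    [DecidableEq n] (F : Matrix n n K) :
    ∃ S : Matrix n n K, Sᵀ = S ∧ IsUnit S ∧ S * F = Fᵀ * S := by
  obtain ⟨B, hsymm, hsep, hadj⟩ := Module.End.isSymmetrizable (toLin' F)
  refine ⟨LinearMap.toMatrix₂' K B, ?_, ?_, ?_⟩
  · ext i j
    exact hsymm.eq _ _
  · rw [isUnit_iff_isUnit_det, isUnit_iff_ne_zero, ← separatingLeft_iff_det_ne_zero,
      LinearMap.separatingLeft_toMatrix₂'_iff]
    exact hsep
  · refine ((isAdjointPair_toLinearMap₂' _ _ F F).mp ?_).symm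
    rwa [Matrix.toLinearMap₂'_toMatrix']

theorem stmt_9 (n : ℕ) (F : Matrix (Fin n) (Fin n) ℝ) :
    ∃ A B : Matrix (Fin n) (Fin n) ℝ,
      Aᵀ = A ∧ Bᵀ = B ∧ IsUnit B ∧ F = A * B⁻¹ := by
  obtain ⟨S, hS, hSu, hSF⟩ := F.exists_symm_isUnit_mul_eq_transpose_mul
  have hdet : IsUnit S.det := (isUnit_iff_isUnit_det S).mp hSu
  refine ⟨F * S⁻¹, S⁻¹, ?_, by rw [transpose_nonsing_inv, hS], isUnit_nonsing_inv_iff.mpr hSu,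
    by rw [nonsing_inv_nonsing_inv _ hdet, Matrix.mul_assoc, nonsing_inv_mul _ hdet,
      Matrix.mul_one]⟩
  calc (F * S⁻¹)ᵀ = S⁻¹ * Fᵀ := by rw [transpose_mul, transpose_nonsing_inv, hS]
    _ = S⁻¹ * (Fᵀ * S) * S⁻¹ := by
      rw [Matrix.mul_assoc, Matrix.mul_assoc, mul_nonsing_inv _ hdet, Matrix.mul_one]
    _ = F * S⁻¹ := by rw [← hSF, ← Matrix.mul_assoc, nonsing_inv_mul _ hdet, Matrix.one_mul]
end
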